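/- arXiv:2506.12028 — 3 statements merged into one kernel-verified Lean document; each statement's English description precedes it below -/
import Mathlib

section
/- The connection coefficients induced by the Rényi divergence satisfy Γ^{(ρ)}_{ijk} := −∂_i∂_j∂_{k'}D_ρ|_{θ=θ'} = ρ · Γ^{(e)}_{ijk} + ρ² · C_{ijk}, where Γ^{(e)}_{ijk} = ∫ p (∂_i∂_j log p)(∂_k log p) dμ is the exponential connection coefficient and C_{ijk} = ∫ p (∂_i log p)(∂_j log p)(∂_k log p) dμ is the Amari–Chentsov tensor. -/
open Real MeasureTheory

open Filter Topology

set_option maxHeartbeats 2000000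

/-- Partial derivative of `f : ℝⁿ → ℝ` in the `i`-th coordinate direction. -/
noncomputable def pd {n : ℕ} (i : Fin n) (f : (Fin n → ℝ) → ℝ) (x : Fin n → ℝ) : ℝ :=
  fderiv ℝ f x (Pi.single i 1)

private lemma pdh {n : ℕ} {f : (Fin n → ℝ) → ℝ} {f' : (Fin n → ℝ) →L[ℝ] ℝ} {x : Fin n → ℝ}
    (h : HasFDerivAt f f' x) (m : Fin n) : pd m f x = f' (Pi.single m 1) := by
  rw [pd, h.fderiv]

private lemma pd_congr {n : ℕ} {f g : (Fin n → ℝ) → ℝ} {x : Fin n → ℝ}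
    (h : f =ᶠ[𝓝 x] g) (m : Fin n) : pd m f x = pd m g x := by rw [pd, pd, h.fderiv_eq]

private lemma csmooth_rpow {n : ℕ} {g : (Fin n → ℝ) → ℝ} (hg : ContDiff ℝ (⊤ : ℕ∞) g)
    (hpos : ∀ x, 0 < g x) (c : ℝ) : ContDiff ℝ (⊤ : ℕ∞) (fun x => g x ^ c) := by
  rw [contDiff_iff_contDiffAt] at *
  intro x
  exact (Real.contDiffAt_rpow_const_of_ne (hpos x).ne').comp x (hg x)

private lemma csmooth_fderiv {n : ℕ} {g : (Fin n → ℝ) → ℝ} (hg : ContDiff ℝ (⊤ : ℕ∞) g)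
    (v : Fin n → ℝ) : ContDiff ℝ (⊤ : ℕ∞) (fun t => fderiv ℝ g t v) :=
  (hg.fderiv_right (by simp)).clm_apply contDiff_const

private lemma hasfd {n : ℕ} {g : (Fin n → ℝ) → ℝ} (hg : ContDiff ℝ (⊤ : ℕ∞) g) (t : Fin n → ℝ) :
    HasFDerivAt g (fderiv ℝ g t) t := ((hg.differentiable (by simp)) t).hasFDerivAt

private lemma rpow_hasfd {n : ℕ} {g : (Fin n → ℝ) → ℝ} (hg : ContDiff ℝ (⊤ : ℕ∞) g)
    (hpos : ∀ x, 0 < g x) (c : ℝ) (t : Fin n → ℝ) :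
    HasFDerivAt (fun s => g s ^ c) ((c * g t ^ (c - 1)) • fderiv ℝ g t) t :=
  (Real.hasDerivAt_rpow_const (Or.inl (hpos t).ne')).comp_hasFDerivAt t (hasfd hg t)

private lemma GEN1 {n : ℕ} {g : (Fin n → ℝ) → ℝ} (hg : ContDiff ℝ (⊤ : ℕ∞) g) (hpos : ∀ x, 0 < g x)
    (τ c : ℝ) (t : Fin n → ℝ) (m : Fin n) :
    pd m (fun s => g s ^ τ * c) t = τ * g t ^ (τ - 1) * fderiv ℝ g t (Pi.single m 1) * c := by
  rw [pdh ((rpow_hasfd hg hpos τ t).mul_const' c) m]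
  simp only [ContinuousLinearMap.smulRight_apply, ContinuousLinearMap.smul_apply, smul_eq_mul,
    op_smul_eq_mul]

private lemma GEN1' {n : ℕ} {g : (Fin n → ℝ) → ℝ} (hg : ContDiff ℝ (⊤ : ℕ∞) g) (hpos : ∀ x, 0 < g x)
    (τ c : ℝ) (t : Fin n → ℝ) (m : Fin n) :
    pd m (fun s => c * g s ^ τ) t = c * (τ * g t ^ (τ - 1) * fderiv ℝ g t (Pi.single m 1)) := by
  rw [pdh ((rpow_hasfd hg hpos τ t).const_mul c) m]
  simp only [ContinuousLinearMap.smul_apply, smul_eq_mul]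

private lemma GEN2 {n : ℕ} {g : (Fin n → ℝ) → ℝ} (hg : ContDiff ℝ (⊤ : ℕ∞) g) (hpos : ∀ x, 0 < g x)
    (a τ c : ℝ) (θ : Fin n → ℝ) (i j : Fin n) :
    pd i (fun t => a * g t ^ τ * fderiv ℝ g t (Pi.single j 1) * c) θ =
      (a * τ * g θ ^ (τ - 1) * fderiv ℝ g θ (Pi.single i 1) * fderiv ℝ g θ (Pi.single j 1)
        + a * g θ ^ τ * fderiv ℝ (fun t => fderiv ℝ g t (Pi.single j 1)) θ (Pi.single i 1)) * c := by
  have h1 : HasFDerivAt (fun t => a * g t ^ τ) (a • ((τ * g θ ^ (τ - 1)) • fderiv ℝ g θ)) θ :=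
    (rpow_hasfd hg hpos τ θ).const_mul a
  have h2 := hasfd (csmooth_fderiv hg (Pi.single j 1)) θ
  rw [pdh (f := fun t => a * g t ^ τ * fderiv ℝ g t (Pi.single j 1) * c) ((h1.mul' h2).mul_const' c) i]
  simp only [ContinuousLinearMap.smulRight_apply, ContinuousLinearMap.add_apply,
    ContinuousLinearMap.smul_apply, smul_eq_mul, op_smul_eq_mul]
  ring

private lemma GENlog {n : ℕ} {g : (Fin n → ℝ) → ℝ} (hg : ContDiff ℝ (⊤ : ℕ∞) g) (hpos : ∀ x, 0 < g x)
    (t : Fin n → ℝ) (m : Fin n) :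
    pd m (fun s => Real.log (g s)) t = (g t)⁻¹ * fderiv ℝ g t (Pi.single m 1) := by
  rw [pdh ((hasfd hg t).log (hpos t).ne') m]
  simp

private lemma GENinvmul {n : ℕ} {g : (Fin n → ℝ) → ℝ} (hg : ContDiff ℝ (⊤ : ℕ∞) g) (hpos : ∀ x, 0 < g x)
    (θ : Fin n → ℝ) (i j : Fin n) :
    pd i (fun t => (g t)⁻¹ * fderiv ℝ g t (Pi.single j 1)) θ =
      -((g θ ^ 2)⁻¹ * fderiv ℝ g θ (Pi.single i 1) * fderiv ℝ g θ (Pi.single j 1))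
        + (g θ)⁻¹ * fderiv ℝ (fun t => fderiv ℝ g t (Pi.single j 1)) θ (Pi.single i 1) := by
  have h1 : HasFDerivAt (fun t => (g t)⁻¹) (-(g θ ^ 2)⁻¹ • fderiv ℝ g θ) θ :=
    (hasDerivAt_inv (hpos θ).ne').comp_hasFDerivAt θ (hasfd hg θ)
  have h2 := hasfd (csmooth_fderiv hg (Pi.single j 1)) θ
  rw [pdh (f := fun t => (g t)⁻¹ * fderiv ℝ g t (Pi.single j 1)) (h1.mul' h2) i]
  simp only [ContinuousLinearMap.smulRight_apply, ContinuousLinearMap.add_apply,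
    ContinuousLinearMap.smul_apply, smul_eq_mul, op_smul_eq_mul]
  ring


/-- The connection induced by the Rényi divergence:
`Γ^{(ρ)}_{ijk} = −∂_i∂_j∂_{k'}D_ρ|_{θ=θ'} = ρ·Γ^{(e)}_{ijk} + ρ²·C_{ijk}`. -/
theorem stmt4 {n : ℕ} {Y : Type*} [MeasurableSpace Y] (μ : Measure Y)
    (p : (Fin n → ℝ) → Y → ℝ)
    (hpos : ∀ θ y, 0 < p θ y)
    (hsmooth : ∀ y, ContDiff ℝ (⊤ : ℕ∞) (fun θ => p θ y))
    (hnorm : ∀ θ, ∫ y, p θ y ∂μ = 1)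
    -- differentiation under the integral sign is assumed valid
    (hexch : ∀ (i : Fin n) (F : (Fin n → ℝ) → Y → ℝ) (θ : Fin n → ℝ),
      (∀ y, ContDiff ℝ (⊤ : ℕ∞) (fun t => F t y)) →
      pd i (fun t => ∫ y, F t y ∂μ) θ = ∫ y, pd i (fun t => F t y) θ ∂μ)
    (ρ : ℝ) (hρ : 0 < ρ) (hρ1 : ρ ≠ 1)
    (D : (Fin n → ℝ) → (Fin n → ℝ) → ℝ)
    (hD : ∀ θ θ', D θ θ' =
      (ρ - 1)⁻¹ * Real.log (∫ y, p θ y ^ ρ * p θ' y ^ (1 - ρ) ∂μ))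
    (Γe C : Fin n → Fin n → Fin n → (Fin n → ℝ) → ℝ)
    (hΓe : ∀ i j k θ, Γe i j k θ =
      ∫ y, p θ y * pd i (fun t => pd j (fun s => Real.log (p s y)) t) θ
        * pd k (fun t => Real.log (p t y)) θ ∂μ)
    (hC : ∀ i j k θ, C i j k θ =
      ∫ y, p θ y * pd i (fun t => Real.log (p t y)) θ
        * pd j (fun t => Real.log (p t y)) θ
        * pd k (fun t => Real.log (p t y)) θ ∂μ) :
    ∀ (i j k : Fin n) (θ : Fin n → ℝ),
      -(pd i (fun t => pd j (fun s => pd k (fun u => D s u) θ) t) θ) =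
        ρ * Γe i j k θ + ρ ^ 2 * C i j k θ := by
  intro i j k θ
  classical
  have hprojC : ContDiff ℝ (⊤ : ℕ∞) (fun t : Fin n → ℝ => t i) :=
    (ContinuousLinearMap.proj (R := ℝ) (φ := fun _ : Fin n => ℝ) i).contDiff
  have hproj : ∀ (x : Fin n → ℝ), HasFDerivAt (fun t : Fin n → ℝ => t i)
      (ContinuousLinearMap.proj (R := ℝ) (φ := fun _ : Fin n => ℝ) i) x :=
    fun x => (ContinuousLinearMap.proj (R := ℝ) (φ := fun _ : Fin n => ℝ) i).hasFDerivAt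
  have hpInt : ∀ x, Integrable (fun y => p x y) μ := by
    intro x
    by_contra h
    have h2 := integral_undef h
    rw [hnorm x] at h2
    norm_num at h2
  -- INT : every function is integrable
  have INT : ∀ f : Y → ℝ, Integrable f μ := by
    intro f
    by_contra hf
    have hFsm : ∀ y, ContDiff ℝ (⊤ : ℕ∞) (fun t : Fin n → ℝ => t i * p θ y + t i * t i * f y) :=
      fun y => (hprojC.mul contDiff_const).add ((hprojC.mul hprojC).mul contDiff_const)
    have hzero : (fun t : Fin n → ℝ => ∫ y, (t i * p θ y + t i * t i * f y) ∂μ)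
        = fun _ => (0 : ℝ) := by
      funext t
      by_cases ht : t i = 0
      · simp [ht]
      · apply integral_undef
        intro hI
        have h2 : Integrable (fun y => t i * t i * f y) μ := by
          have h3 := hI.sub ((hpInt θ).const_mul (t i))
          have h3' : ((fun y => t i * p θ y + t i * t i * f y) - fun y => t i * p θ y)
              = fun y => t i * t i * f y := by
            funext y; simp
          rwa [h3'] at h3
        have h4 := h2.const_mul ((t i * t i)⁻¹)
        have h5 : (fun y => (t i * t i)⁻¹ * (t i * t i * f y)) = f := by
          funext y
          rw [← mul_assoc, inv_mul_cancel₀ (mul_ne_zero ht ht), one_mul]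
        rw [h5] at h4
        exact hf h4
    have hx := hexch i (fun t y => t i * p θ y + t i * t i * f y) (fun _ => 0) hFsm
    rw [hzero] at hx
    have hL : pd i (fun _ : Fin n → ℝ => (0:ℝ)) (fun _ => 0) = 0 := by
      simp [pd]
    rw [hL] at hx
    have hR : ∀ y, pd i (fun t : Fin n → ℝ => t i * p θ y + t i * t i * f y) (fun _ => 0)
        = p θ y := by
      intro y
      have h1 : HasFDerivAt (fun t : Fin n → ℝ => t i * p θ y + t i * t i * f y) _
          (fun _ => (0:ℝ)) :=
        ((hproj _).mul_const' (p θ y)).add (((hproj _).mul' (hproj _)).mul_const' (f y))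
      rw [pdh h1 i]
      simp
    rw [show (fun y => pd i (fun t : Fin n → ℝ => t i * p θ y + t i * t i * f y) (fun _ => 0))
        = fun y => p θ y from funext hR] at hx
    rw [hnorm θ] at hx
    norm_num at hx
  -- KEY : differentiability at points of nonzero integral
  have KEY : ∀ (F : (Fin n → ℝ) → Y → ℝ), (∀ y, ContDiff ℝ (⊤ : ℕ∞) (fun t => F t y)) →
      ∀ x : Fin n → ℝ, (∫ y, F x y ∂μ) ≠ 0 →
      DifferentiableAt ℝ (fun t => ∫ y, F t y ∂μ) x := by
    intro F hF x hgx
    by_contra hnd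
    have main : ∀ m : ℝ, m * (∫ y, F x y ∂μ) + (∫ y, pd i (fun t => F t y) x ∂μ) = 0 := by
      intro m
      have hcC : ContDiff ℝ (⊤ : ℕ∞) (fun t : Fin n → ℝ => 1 + m * (t i - x i)) :=
        contDiff_const.add (contDiff_const.mul (hprojC.sub contDiff_const))
      have hcd : ∀ x', HasFDerivAt (fun t : Fin n → ℝ => 1 + m * (t i - x i))
          ((0 : (Fin n → ℝ) →L[ℝ] ℝ) + m • ((ContinuousLinearMap.proj (R := ℝ) (φ := fun _ : Fin n => ℝ) i) - 0)) x' :=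
        fun x' => (hasFDerivAt_const 1 x').add (((hproj x').sub (hasFDerivAt_const (x i) x')).const_mul m)
      have hF2 : ∀ y, ContDiff ℝ (⊤ : ℕ∞) (fun t => (1 + m * (t i - x i)) * F t y) :=
        fun y => hcC.mul (hF y)
      have heq : (fun t : Fin n → ℝ => ∫ y, (1 + m * (t i - x i)) * F t y ∂μ)
          = fun t => (1 + m * (t i - x i)) * ∫ y, F t y ∂μ :=
        funext fun t => integral_const_mul _ _
      have hnd2 : ¬ DifferentiableAt ℝ (fun t : Fin n → ℝ => (1 + m * (t i - x i)) * ∫ y, F t y ∂μ) x := by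
        intro hcg
        apply hnd
        have hcd' : DifferentiableAt ℝ (fun t : Fin n → ℝ => 1 + m * (t i - x i)) x :=
          (hcd x).differentiableAt
        have hcx : (1 : ℝ) + m * (x i - x i) ≠ 0 := by simp
        have hinv : DifferentiableAt ℝ (fun t : Fin n → ℝ => (1 + m * (t i - x i))⁻¹) x :=
          hcd'.inv hcx
        have h3 := hinv.mul hcg
        apply h3.congr_of_eventuallyEq
        have hne : ∀ᶠ t in 𝓝 x, (1 + m * (t i - x i)) ≠ 0 :=
          hcd'.continuousAt.eventually_ne hcx
        filter_upwards [hne] with t hct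
        simp only [Pi.mul_apply]
        rw [← mul_assoc, inv_mul_cancel₀ hct, one_mul]
      have hz : fderiv ℝ (fun t : Fin n → ℝ => (1 + m * (t i - x i)) * ∫ y, F t y ∂μ) x = 0 :=
        fderiv_zero_of_not_differentiableAt hnd2
      have hx1 := hexch i (fun t y => (1 + m * (t i - x i)) * F t y) x hF2
      rw [heq] at hx1
      have hL : pd i (fun t : Fin n → ℝ => (1 + m * (t i - x i)) * ∫ y, F t y ∂μ) x = 0 := by
        rw [pd, hz]; simp
      rw [hL] at hx1
      have hR : ∀ y, pd i (fun t : Fin n → ℝ => (1 + m * (t i - x i)) * F t y) x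
          = m * F x y + pd i (fun t => F t y) x := by
        intro y
        have hFd : HasFDerivAt (fun t => F t y) (fderiv ℝ (fun t => F t y) x) x :=
          (((hF y).differentiable (by simp)) x).hasFDerivAt
        have h1 := (hcd x).mul' hFd
        rw [pdh (f := fun t => (1 + m * (t i - x i)) * F t y) h1 i]
        have : pd i (fun t => F t y) x = fderiv ℝ (fun t => F t y) x (Pi.single i 1) := rfl
        rw [this]
        simp [Pi.single_eq_same, op_smul_eq_mul]
        ring
      rw [show (fun y => pd i (fun t : Fin n → ℝ => (1 + m * (t i - x i)) * F t y) x)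
          = fun y => m * F x y + pd i (fun t => F t y) x from funext hR] at hx1
      rw [integral_add ((INT _).const_mul m) (INT _), integral_const_mul] at hx1
      linarith [hx1.symm]
    have h1 := main 1
    have h2 := main 2
    have : (∫ y, F x y ∂μ) = 0 := by linarith
    exact hgx this
  -- DIFF : differentiability everywhere
  have DIFF : ∀ (F : (Fin n → ℝ) → Y → ℝ), (∀ y, ContDiff ℝ (⊤ : ℕ∞) (fun t => F t y)) →
      ∀ x : Fin n → ℝ, DifferentiableAt ℝ (fun t => ∫ y, F t y ∂μ) x := by
    intro F hF x
    by_cases h0 : (∫ y, F x y ∂μ) = 0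
    · have hF' : ∀ y, ContDiff ℝ (⊤ : ℕ∞) (fun t => F t y + p t y) :=
        fun y => (hF y).add (hsmooth y)
      have heq : (fun t : Fin n → ℝ => ∫ y, (F t y + p t y) ∂μ)
          = fun t => (∫ y, F t y ∂μ) + 1 := by
        funext t
        rw [integral_add (INT _) (INT _), hnorm t]
      have h1 : DifferentiableAt ℝ (fun t : Fin n → ℝ => ∫ y, (F t y + p t y) ∂μ) x := by
        apply KEY _ hF' x
        rw [show (∫ y, (F x y + p x y) ∂μ) = (∫ y, F x y ∂μ) + 1 from congrFun heq x, h0]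
        norm_num
      rw [heq] at h1
      have h2 := h1.sub_const (1 : ℝ)
      simpa using h2
    · exact KEY F hF x h0

  -- ===== derivative formulas for A and Bk via hexch =====
  have hApd : ∀ (x : Fin n → ℝ) (m : Fin n),
      fderiv ℝ (fun s => ∫ y, p s y ^ ρ * p θ y ^ (1 - ρ) ∂μ) x (Pi.single m 1)
        = ∫ y, ρ * p x y ^ (ρ - 1) * fderiv ℝ (fun t' => p t' y) x (Pi.single m 1)
            * p θ y ^ (1 - ρ) ∂μ := by
    intro x m
    have h : pd m (fun s => ∫ y, p s y ^ ρ * p θ y ^ (1 - ρ) ∂μ) x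
        = ∫ y, pd m (fun s => p s y ^ ρ * p θ y ^ (1 - ρ)) x ∂μ :=
      hexch m (fun s y => p s y ^ ρ * p θ y ^ (1 - ρ)) x
        (fun y => (csmooth_rpow (hsmooth y) (fun x' => hpos x' y) ρ).mul contDiff_const)
    rw [show (fun y => pd m (fun s => p s y ^ ρ * p θ y ^ (1 - ρ)) x)
        = fun y => ρ * p x y ^ (ρ - 1) * fderiv ℝ (fun t' => p t' y) x (Pi.single m 1)
            * p θ y ^ (1 - ρ)
      from funext fun y => GEN1 (hsmooth y) (fun x' => hpos x' y) ρ (p θ y ^ (1 - ρ)) x m] at h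
    exact h
  have hBkpd : ∀ (x : Fin n → ℝ),
      fderiv ℝ (fun s => ∫ y, p s y ^ ρ * (p θ y ^ (-ρ) * fderiv ℝ (fun t' => p t' y) θ (Pi.single k 1)) ∂μ) x (Pi.single j 1) = ∫ y, ρ * p x y ^ (ρ - 1) * fderiv ℝ (fun t' => p t' y) x (Pi.single j 1) * (p θ y ^ (-ρ) * fderiv ℝ (fun t' => p t' y) θ (Pi.single k 1)) ∂μ := by
    intro x
    have h : pd j (fun s => ∫ y, p s y ^ ρ * (p θ y ^ (-ρ) * fderiv ℝ (fun t' => p t' y) θ (Pi.single k 1)) ∂μ) x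
        = ∫ y, pd j (fun s => p s y ^ ρ * (p θ y ^ (-ρ) * fderiv ℝ (fun t' => p t' y) θ (Pi.single k 1))) x ∂μ :=
      hexch j (fun s y => p s y ^ ρ * (p θ y ^ (-ρ) * fderiv ℝ (fun t' => p t' y) θ (Pi.single k 1))) x
        (fun y => (csmooth_rpow (hsmooth y) (fun x' => hpos x' y) ρ).mul contDiff_const)
    rw [show (fun y => pd j (fun s => p s y ^ ρ * (p θ y ^ (-ρ) * fderiv ℝ (fun t' => p t' y) θ (Pi.single k 1))) x)
        = fun y => ρ * p x y ^ (ρ - 1) * fderiv ℝ (fun t' => p t' y) x (Pi.single j 1)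
            * (p θ y ^ (-ρ) * fderiv ℝ (fun t' => p t' y) θ (Pi.single k 1))
      from funext fun y => GEN1 (hsmooth y) (fun x' => hpos x' y) ρ
        (p θ y ^ (-ρ) * fderiv ℝ (fun t' => p t' y) θ (Pi.single k 1)) x j] at h
    exact h
  -- ===== score integrals vanish =====
  have hq0 : ∀ (m : Fin n), (∫ y, fderiv ℝ (fun t' => p t' y) θ (Pi.single m 1) ∂μ) = 0 := by
    intro m
    have h := hexch m p θ hsmooth
    rw [show (fun t => ∫ y, p t y ∂μ) = fun _ => (1:ℝ) from funext hnorm] at h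
    rw [show pd m (fun _ : Fin n → ℝ => (1:ℝ)) θ = 0 from by simp [pd]] at h
    rw [show (fun y => pd m (fun t => p t y) θ) = fun y => fderiv ℝ (fun t' => p t' y) θ (Pi.single m 1) from rfl] at h
    exact h.symm
  -- ===== values at θ =====
  have hAθ : (∫ y, p θ y ^ ρ * p θ y ^ (1 - ρ) ∂μ) = 1 := by
    rw [show (fun y => p θ y ^ ρ * p θ y ^ (1 - ρ)) = fun y => p θ y from funext fun y => by
      rw [← Real.rpow_add (hpos θ y), show ρ + (1 - ρ) = 1 from by ring, Real.rpow_one]]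
    exact hnorm θ
  have hAθne : (∫ y, p θ y ^ ρ * p θ y ^ (1 - ρ) ∂μ) ≠ 0 := by rw [hAθ]; norm_num
  have hBkθ : (∫ y, p θ y ^ ρ * (p θ y ^ (-ρ) * fderiv ℝ (fun t' => p t' y) θ (Pi.single k 1)) ∂μ) = 0 := by
    rw [show (fun y => p θ y ^ ρ * (p θ y ^ (-ρ) * fderiv ℝ (fun t' => p t' y) θ (Pi.single k 1)))
        = fun y => fderiv ℝ (fun t' => p t' y) θ (Pi.single k 1) from funext fun y => by
      have e1 : p θ y ^ ρ * p θ y ^ (-ρ) = 1 := by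
        rw [← Real.rpow_add (hpos θ y), show ρ + -ρ = 0 from by ring, Real.rpow_zero]
      linear_combination (fderiv ℝ (fun t' => p t' y) θ (Pi.single k 1)) * e1]
    exact hq0 k
  have hA0 : ∀ (m : Fin n),
      (∫ y, ρ * p θ y ^ (ρ - 1) * fderiv ℝ (fun t' => p t' y) θ (Pi.single m 1)
          * p θ y ^ (1 - ρ) ∂μ) = 0 := by
    intro m
    rw [show (fun y => ρ * p θ y ^ (ρ - 1) * fderiv ℝ (fun t' => p t' y) θ (Pi.single m 1)
          * p θ y ^ (1 - ρ))
        = fun y => ρ * fderiv ℝ (fun t' => p t' y) θ (Pi.single m 1) from funext fun y => by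
      have e1 : p θ y ^ (ρ - 1) * p θ y ^ (1 - ρ) = 1 := by
        rw [← Real.rpow_add (hpos θ y), show ρ - 1 + (1 - ρ) = 0 from by ring, Real.rpow_zero]
      linear_combination (ρ * fderiv ℝ (fun t' => p t' y) θ (Pi.single m 1)) * e1]
    rw [integral_const_mul, hq0 m, mul_zero]
  -- ===== differentiability of the four basic functions =====
  have hAdiff : ∀ x, DifferentiableAt ℝ (fun s => ∫ y, p s y ^ ρ * p θ y ^ (1 - ρ) ∂μ) x :=
    fun x => DIFF (fun s y => p s y ^ ρ * p θ y ^ (1 - ρ))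
      (fun y => (csmooth_rpow (hsmooth y) (fun x' => hpos x' y) ρ).mul contDiff_const) x
  have hBkdiff : ∀ x, DifferentiableAt ℝ (fun s => ∫ y, p s y ^ ρ * (p θ y ^ (-ρ) * fderiv ℝ (fun t' => p t' y) θ (Pi.single k 1)) ∂μ) x :=
    fun x => DIFF (fun s y => p s y ^ ρ * (p θ y ^ (-ρ) * fderiv ℝ (fun t' => p t' y) θ (Pi.single k 1)))
      (fun y => (csmooth_rpow (hsmooth y) (fun x' => hpos x' y) ρ).mul contDiff_const) x
  have hAjdiff : ∀ x, DifferentiableAt ℝ (fun t => ∫ y, ρ * p t y ^ (ρ - 1) * fderiv ℝ (fun t' => p t' y) t (Pi.single j 1) * p θ y ^ (1 - ρ) ∂μ) x :=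
    fun x => DIFF (fun t y => ρ * p t y ^ (ρ - 1) * fderiv ℝ (fun t' => p t' y) t (Pi.single j 1) * p θ y ^ (1 - ρ))
      (fun y => ((contDiff_const.mul (csmooth_rpow (hsmooth y) (fun x' => hpos x' y) (ρ - 1))).mul
        (csmooth_fderiv (hsmooth y) (Pi.single j 1))).mul contDiff_const) x
  have hBkjdiff : ∀ x, DifferentiableAt ℝ (fun t => ∫ y, ρ * p t y ^ (ρ - 1) * fderiv ℝ (fun t' => p t' y) t (Pi.single j 1) * (p θ y ^ (-ρ) * fderiv ℝ (fun t' => p t' y) θ (Pi.single k 1)) ∂μ) x :=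
    fun x => DIFF (fun t y => ρ * p t y ^ (ρ - 1) * fderiv ℝ (fun t' => p t' y) t (Pi.single j 1) * (p θ y ^ (-ρ) * fderiv ℝ (fun t' => p t' y) θ (Pi.single k 1)))
      (fun y => ((contDiff_const.mul (csmooth_rpow (hsmooth y) (fun x' => hpos x' y) (ρ - 1))).mul
        (csmooth_fderiv (hsmooth y) (Pi.single j 1))).mul contDiff_const) x
  -- ===== step 1 : the inner derivative =====
  have hψ : ∀ s : Fin n → ℝ, (∫ y, p s y ^ ρ * p θ y ^ (1 - ρ) ∂μ) ≠ 0 →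
      pd k (fun u => D s u) θ = -((∫ y, p s y ^ ρ * p θ y ^ (1 - ρ) ∂μ)⁻¹ * (∫ y, p s y ^ ρ * (p θ y ^ (-ρ) * fderiv ℝ (fun t' => p t' y) θ (Pi.single k 1)) ∂μ)) := by
    intro s hAs
    have hfun : (fun u => D s u) = fun u => (ρ - 1)⁻¹ * Real.log (∫ y, p s y ^ ρ * p u y ^ (1 - ρ) ∂μ) :=
      funext fun u => hD s u
    have hGdiff : DifferentiableAt ℝ (fun u => ∫ y, p s y ^ ρ * p u y ^ (1 - ρ) ∂μ) θ :=
      DIFF (fun u y => p s y ^ ρ * p u y ^ (1 - ρ))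
        (fun y => contDiff_const.mul (csmooth_rpow (hsmooth y) (fun x' => hpos x' y) (1 - ρ))) θ
    have hlog := hGdiff.hasFDerivAt.log hAs
    have hful : HasFDerivAt (fun u => D s u)
        (((ρ - 1)⁻¹ * (∫ y, p s y ^ ρ * p θ y ^ (1 - ρ) ∂μ)⁻¹) • fderiv ℝ (fun u => ∫ y, p s y ^ ρ * p u y ^ (1 - ρ) ∂μ) θ) θ := by
      rw [hfun]
      have h2 := hlog.const_mul ((ρ - 1)⁻¹)
      rwa [smul_smul] at h2
    rw [pdh hful k]
    simp only [ContinuousLinearMap.smul_apply, smul_eq_mul]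
    have hGpd : fderiv ℝ (fun u => ∫ y, p s y ^ ρ * p u y ^ (1 - ρ) ∂μ) θ (Pi.single k 1) = (1 - ρ) * (∫ y, p s y ^ ρ * (p θ y ^ (-ρ) * fderiv ℝ (fun t' => p t' y) θ (Pi.single k 1)) ∂μ) := by
      have h : pd k (fun u => ∫ y, p s y ^ ρ * p u y ^ (1 - ρ) ∂μ) θ
          = ∫ y, pd k (fun u => p s y ^ ρ * p u y ^ (1 - ρ)) θ ∂μ :=
        hexch k (fun u y => p s y ^ ρ * p u y ^ (1 - ρ)) θ
          (fun y => contDiff_const.mul (csmooth_rpow (hsmooth y) (fun x' => hpos x' y) (1 - ρ)))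
      rw [show (fun y => pd k (fun u => p s y ^ ρ * p u y ^ (1 - ρ)) θ)
          = fun y => (1 - ρ) * (p s y ^ ρ * (p θ y ^ (-ρ) * fderiv ℝ (fun t' => p t' y) θ (Pi.single k 1))) from funext fun y => by
        have h2 := GEN1' (hsmooth y) (fun x' => hpos x' y) (1 - ρ) (p s y ^ ρ) θ k
        rw [show (1 : ℝ) - ρ - 1 = -ρ from by ring] at h2
        rw [h2]; ring] at h
      rw [integral_const_mul] at h
      exact h
    rw [hGpd]
    have hkey : (ρ - 1)⁻¹ * (1 - ρ) = -1 := by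
      have h1 : ρ - 1 ≠ 0 := sub_ne_zero.mpr hρ1
      field_simp
      ring
    linear_combination ((∫ y, p s y ^ ρ * p θ y ^ (1 - ρ) ∂μ)⁻¹ * (∫ y, p s y ^ ρ * (p θ y ^ (-ρ) * fderiv ℝ (fun t' => p t' y) θ (Pi.single k 1)) ∂μ)) * hkey
  -- ===== neighborhood where A ≠ 0 =====
  obtain ⟨V, hV1, hVopen, hθV⟩ : ∃ V : Set (Fin n → ℝ),
      (∀ s ∈ V, (∫ y, p s y ^ ρ * p θ y ^ (1 - ρ) ∂μ) ≠ 0) ∧ IsOpen V ∧ θ ∈ V := by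
    have hAcont : ContinuousAt (fun s => ∫ y, p s y ^ ρ * p θ y ^ (1 - ρ) ∂μ) θ := (hAdiff θ).continuousAt
    have hAne : ∀ᶠ s in 𝓝 θ, (∫ y, p s y ^ ρ * p θ y ^ (1 - ρ) ∂μ) ≠ 0 := hAcont.eventually_ne hAθne
    rcases eventually_nhds_iff.mp hAne with ⟨V, h1, h2, h3⟩
    exact ⟨V, h1, h2, h3⟩
  -- ===== step 2 : the middle derivative =====
  have hχ : ∀ t ∈ V, pd j (fun s => pd k (fun u => D s u) θ) t = -((∫ y, p t y ^ ρ * p θ y ^ (1 - ρ) ∂μ)⁻¹ * (∫ y, ρ * p t y ^ (ρ - 1) * fderiv ℝ (fun t' => p t' y) t (Pi.single j 1) * (p θ y ^ (-ρ) * fderiv ℝ (fun t' => p t' y) θ (Pi.single k 1)) ∂μ)) + (∫ y, p t y ^ ρ * p θ y ^ (1 - ρ) ∂μ)⁻¹ * ((∫ y, p t y ^ ρ * p θ y ^ (1 - ρ) ∂μ)⁻¹ * ((∫ y, ρ * p t y ^ (ρ - 1) * fderiv ℝ (fun t' => p t' y) t (Pi.single j 1) * p θ y ^ (1 - ρ)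 ∂μ) * (∫ y, p t y ^ ρ * (p θ y ^ (-ρ) * fderiv ℝ (fun t' => p t' y) θ (Pi.single k 1)) ∂μ))) := by
    intro t ht
    have hev : (fun s => pd k (fun u => D s u) θ)
        =ᶠ[𝓝 t] (fun s => -((∫ y, p s y ^ ρ * p θ y ^ (1 - ρ) ∂μ)⁻¹ * (∫ y, p s y ^ ρ * (p θ y ^ (-ρ) * fderiv ℝ (fun t' => p t' y) θ (Pi.single k 1)) ∂μ))) :=
      Filter.eventuallyEq_of_mem (hVopen.mem_nhds ht) (fun s hs => hψ s (hV1 s hs))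
    rw [pd_congr hev j]
    have hAt : (∫ y, p t y ^ ρ * p θ y ^ (1 - ρ) ∂μ) ≠ 0 := hV1 t ht
    have hAfd := (hAdiff t).hasFDerivAt
    have hBfd := (hBkdiff t).hasFDerivAt
    have hinv : HasFDerivAt (fun s => (∫ y, p s y ^ ρ * p θ y ^ (1 - ρ) ∂μ)⁻¹)
        (-((∫ y, p t y ^ ρ * p θ y ^ (1 - ρ) ∂μ) ^ 2)⁻¹ • fderiv ℝ (fun s => ∫ y, p s y ^ ρ * p θ y ^ (1 - ρ) ∂μ) t) t :=
      (hasDerivAt_inv hAt).comp_hasFDerivAt t hAfd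
    have hprod : HasFDerivAt (fun s => -((∫ y, p s y ^ ρ * p θ y ^ (1 - ρ) ∂μ)⁻¹ * (∫ y, p s y ^ ρ * (p θ y ^ (-ρ) * fderiv ℝ (fun t' => p t' y) θ (Pi.single k 1)) ∂μ))) _ t := (hinv.mul' hBfd).neg
    rw [pdh hprod j]
    simp only [ContinuousLinearMap.neg_apply, ContinuousLinearMap.add_apply,
      ContinuousLinearMap.smul_apply, ContinuousLinearMap.smulRight_apply, smul_eq_mul, op_smul_eq_mul]
    rw [hApd t j, hBkpd t]
    field_simp
    ring
  -- ===== step 3 : the outer derivative at θ =====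
  have hev2 : (fun t => pd j (fun s => pd k (fun u => D s u) θ) t) =ᶠ[𝓝 θ]
      (fun t => -((∫ y, p t y ^ ρ * p θ y ^ (1 - ρ) ∂μ)⁻¹ * (∫ y, ρ * p t y ^ (ρ - 1) * fderiv ℝ (fun t' => p t' y) t (Pi.single j 1) * (p θ y ^ (-ρ) * fderiv ℝ (fun t' => p t' y) θ (Pi.single k 1)) ∂μ)) + (∫ y, p t y ^ ρ * p θ y ^ (1 - ρ) ∂μ)⁻¹ * ((∫ y, p t y ^ ρ * p θ y ^ (1 - ρ) ∂μ)⁻¹ * ((∫ y, ρ * p t y ^ (ρ - 1) * fderiv ℝ (fun t' => p t' y) t (Pi.single j 1) * p θ y ^ (1 - ρ) ∂μ) * (∫ y, p t y ^ ρ * (p θ y ^ (-ρ) * fderiv ℝ (fun t' => p t' y) θ (Pi.single k 1)) ∂μ)))) :=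
    Filter.eventuallyEq_of_mem (hVopen.mem_nhds hθV) (fun t ht => hχ t ht)
  rw [pd_congr hev2 i]
  have hAfdθ := (hAdiff θ).hasFDerivAt
  have hinvθ : HasFDerivAt (fun s => (∫ y, p s y ^ ρ * p θ y ^ (1 - ρ) ∂μ)⁻¹)
      (-((∫ y, p θ y ^ ρ * p θ y ^ (1 - ρ) ∂μ) ^ 2)⁻¹ • fderiv ℝ (fun s => ∫ y, p s y ^ ρ * p θ y ^ (1 - ρ) ∂μ) θ) θ :=
    (hasDerivAt_inv hAθne).comp_hasFDerivAt θ hAfdθ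
  have hAjfd := (hAjdiff θ).hasFDerivAt
  have hBkfd := (hBkdiff θ).hasFDerivAt
  have hBkjfd := (hBkjdiff θ).hasFDerivAt
  have htot : HasFDerivAt (fun t => -((∫ y, p t y ^ ρ * p θ y ^ (1 - ρ) ∂μ)⁻¹ * (∫ y, ρ * p t y ^ (ρ - 1) * fderiv ℝ (fun t' => p t' y) t (Pi.single j 1) * (p θ y ^ (-ρ) * fderiv ℝ (fun t' => p t' y) θ (Pi.single k 1)) ∂μ)) + (∫ y, p t y ^ ρ * p θ y ^ (1 - ρ) ∂μ)⁻¹ * ((∫ y, p t y ^ ρ * p θ y ^ (1 - ρ) ∂μ)⁻¹ * ((∫ y, ρ * p t y ^ (ρ - 1) * fderiv ℝ (fun t' => p t' y) t (Pi.single j 1) * p θ y ^ (1 - ρ) ∂μ) * (∫ y, p t y ^ ρ * (p θ y ^ (-ρ) * fderiv ℝ (fun t' => p t' y) θ (Pi.single k 1)) ∂μ)))) _ θ :=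
    ((hinvθ.mul' hBkjfd).neg).add (hinvθ.mul' (hinvθ.mul' (hAjfd.mul' hBkfd)))
  rw [pdh htot i]
  simp only [ContinuousLinearMap.neg_apply, ContinuousLinearMap.add_apply,
    ContinuousLinearMap.smul_apply, ContinuousLinearMap.smulRight_apply, smul_eq_mul, op_smul_eq_mul]
  rw [hApd θ i, hA0 i, hAθ, hBkθ]
  rw [show (∫ y, ρ * p θ y ^ (ρ - 1) * fderiv ℝ (fun t' => p t' y) θ (Pi.single j 1) * p θ y ^ (1 - ρ) ∂μ) = 0 from hA0 j]
  -- ===== the remaining fourth derivative term =====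
  have hBkjpd : fderiv ℝ (fun t => ∫ y, ρ * p t y ^ (ρ - 1) * fderiv ℝ (fun t' => p t' y) t (Pi.single j 1) * (p θ y ^ (-ρ) * fderiv ℝ (fun t' => p t' y) θ (Pi.single k 1)) ∂μ) θ (Pi.single i 1)
      = ∫ y, ρ * (ρ - 1) * ((p θ y)⁻¹ * (p θ y)⁻¹ * (fderiv ℝ (fun t' => p t' y) θ (Pi.single i 1) * fderiv ℝ (fun t' => p t' y) θ (Pi.single j 1) * fderiv ℝ (fun t' => p t' y) θ (Pi.single k 1))) + ρ * ((p θ y)⁻¹ * (fderiv ℝ (fun t => fderiv ℝ (fun t' => p t' y) t (Pi.single j 1)) θ (Pi.single i 1) * fderiv ℝ (fun t' => p t' y) θ (Pi.single k 1))) ∂μ := by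
    have h : pd i (fun t => ∫ y, ρ * p t y ^ (ρ - 1) * fderiv ℝ (fun t' => p t' y) t (Pi.single j 1) * (p θ y ^ (-ρ) * fderiv ℝ (fun t' => p t' y) θ (Pi.single k 1)) ∂μ) θ
        = ∫ y, pd i (fun t => ρ * p t y ^ (ρ - 1) * fderiv ℝ (fun t' => p t' y) t (Pi.single j 1) * (p θ y ^ (-ρ) * fderiv ℝ (fun t' => p t' y) θ (Pi.single k 1))) θ ∂μ :=
      hexch i (fun t y => ρ * p t y ^ (ρ - 1) * fderiv ℝ (fun t' => p t' y) t (Pi.single j 1) * (p θ y ^ (-ρ) * fderiv ℝ (fun t' => p t' y) θ (Pi.single k 1))) θ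
        (fun y => ((contDiff_const.mul (csmooth_rpow (hsmooth y) (fun x' => hpos x' y) (ρ - 1))).mul
          (csmooth_fderiv (hsmooth y) (Pi.single j 1))).mul contDiff_const)
    rw [show (fun y => pd i (fun t => ρ * p t y ^ (ρ - 1) * fderiv ℝ (fun t' => p t' y) t (Pi.single j 1)
          * (p θ y ^ (-ρ) * fderiv ℝ (fun t' => p t' y) θ (Pi.single k 1))) θ)
        = fun y => ρ * (ρ - 1) * ((p θ y)⁻¹ * (p θ y)⁻¹ * (fderiv ℝ (fun t' => p t' y) θ (Pi.single i 1) * fderiv ℝ (fun t' => p t' y) θ (Pi.single j 1) * fderiv ℝ (fun t' => p t' y) θ (Pi.single k 1))) + ρ * ((p θ y)⁻¹ * (fderiv ℝ (fun t => fderiv ℝ (fun t' => p t' y) t (Pi.single j 1)) θ (Pi.single i 1) * fderiv ℝ (fun t' => p t' y) θ (Pi.single k 1))) from funext fun y => by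
      have h2 := GEN2 (hsmooth y) (fun x' => hpos x' y) ρ (ρ - 1)
        (p θ y ^ (-ρ) * fderiv ℝ (fun t' => p t' y) θ (Pi.single k 1)) θ i j
      rw [h2]
      have e1 : p θ y ^ (ρ - 1 - 1) * p θ y ^ (-ρ) = (p θ y)⁻¹ * (p θ y)⁻¹ := by
        rw [← Real.rpow_add (hpos θ y), show ρ - 1 - 1 + -ρ = -1 + -1 from by ring,
          Real.rpow_add (hpos θ y), Real.rpow_neg_one]
      have e2 : p θ y ^ (ρ - 1) * p θ y ^ (-ρ) = (p θ y)⁻¹ := by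
        rw [← Real.rpow_add (hpos θ y), show ρ - 1 + -ρ = -1 from by ring, Real.rpow_neg_one]
      linear_combination (ρ * (ρ - 1) * (fderiv ℝ (fun t' => p t' y) θ (Pi.single i 1)) * (fderiv ℝ (fun t' => p t' y) θ (Pi.single j 1)) * (fderiv ℝ (fun t' => p t' y) θ (Pi.single k 1))) * e1
        + (ρ * (fderiv ℝ (fun t => fderiv ℝ (fun t' => p t' y) t (Pi.single j 1)) θ (Pi.single i 1)) * (fderiv ℝ (fun t' => p t' y) θ (Pi.single k 1))) * e2] at h
    exact h
  rw [hBkjpd]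
  rw [integral_add ((INT _).const_mul _) ((INT _).const_mul _), integral_const_mul,
    integral_const_mul]
  -- ===== rewrite Γe and C =====
  rw [hΓe, hC]
  rw [show (fun y => p θ y * pd i (fun t => pd j (fun s => Real.log (p s y)) t) θ
        * pd k (fun t => Real.log (p t y)) θ)
      = fun y => ((p θ y)⁻¹ * (fderiv ℝ (fun t => fderiv ℝ (fun t' => p t' y) t (Pi.single j 1)) θ (Pi.single i 1) * fderiv ℝ (fun t' => p t' y) θ (Pi.single k 1))) - ((p θ y)⁻¹ * (p θ y)⁻¹ * (fderiv ℝ (fun t' => p t' y) θ (Pi.single i 1) * fderiv ℝ (fun t' => p t' y) θ (Pi.single j 1) * fderiv ℝ (fun t' => p t' y) θ (Pi.single k 1))) from funext fun y => by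
    have e1 : (fun t => pd j (fun s => Real.log (p s y)) t)
        = fun t => (p t y)⁻¹ * fderiv ℝ (fun t' => p t' y) t (Pi.single j 1) :=
      funext fun t => GENlog (hsmooth y) (fun x' => hpos x' y) t j
    rw [e1]
    rw [show pd i (fun t => (p t y)⁻¹ * fderiv ℝ (fun t' => p t' y) t (Pi.single j 1)) θ
        = -((p θ y ^ 2)⁻¹ * (fderiv ℝ (fun t' => p t' y) θ (Pi.single i 1)) * (fderiv ℝ (fun t' => p t' y) θ (Pi.single j 1))) + (p θ y)⁻¹ * (fderiv ℝ (fun t => fderiv ℝ (fun t' => p t' y) t (Pi.single j 1)) θ (Pi.single i 1))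
      from GENinvmul (hsmooth y) (fun x' => hpos x' y) θ i j]
    rw [show pd k (fun t => Real.log (p t y)) θ = (p θ y)⁻¹ * (fderiv ℝ (fun t' => p t' y) θ (Pi.single k 1))
      from GENlog (hsmooth y) (fun x' => hpos x' y) θ k]
    have hne := (hpos θ y).ne'
    field_simp
    try ring]
  rw [show (fun y => p θ y * pd i (fun t => Real.log (p t y)) θ
        * pd j (fun t => Real.log (p t y)) θ * pd k (fun t => Real.log (p t y)) θ)
      = fun y => ((p θ y)⁻¹ * (p θ y)⁻¹ * (fderiv ℝ (fun t' => p t' y) θ (Pi.single i 1) * fderiv ℝ (fun t' => p t' y) θ (Pi.single j 1) * fderiv ℝ (fun t' => p t' y) θ (Pi.single k 1))) from funext fun y => by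
    rw [show pd i (fun t => Real.log (p t y)) θ = (p θ y)⁻¹ * (fderiv ℝ (fun t' => p t' y) θ (Pi.single i 1))
      from GENlog (hsmooth y) (fun x' => hpos x' y) θ i]
    rw [show pd j (fun t => Real.log (p t y)) θ = (p θ y)⁻¹ * (fderiv ℝ (fun t' => p t' y) θ (Pi.single j 1))
      from GENlog (hsmooth y) (fun x' => hpos x' y) θ j]
    rw [show pd k (fun t => Real.log (p t y)) θ = (p θ y)⁻¹ * (fderiv ℝ (fun t' => p t' y) θ (Pi.single k 1))
      from GENlog (hsmooth y) (fun x' => hpos x' y) θ k]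
    have hne := (hpos θ y).ne'
    field_simp
    try ring]
  rw [integral_sub (INT _) (INT _)]
  ring
end

section
/- The dual connection coefficients induced by the Rényi divergence satisfy Γ^{(ρ*)}_{ijk} := −∂_k∂_{i'}∂_{j'}D_ρ|_{θ=θ'} = ρ · Γ^{(e)}_{ijk} + ρ(1−ρ) · C_{ijk}, with Γ^{(e)} and C the exponential connection coefficients and the Amari–Chentsov tensor respectively. -/
open Real MeasureTheory

lemma pd_const_mul {n : ℕ} (c : ℝ) (g : (Fin n → ℝ) → ℝ) (i : Fin n) (θ : Fin n → ℝ) :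
    pd i (fun x => c * g x) θ = c * pd i g θ := by
  rcases eq_or_ne c 0 with rfl | hc
  · simp [pd]
  by_cases hg : DifferentiableAt ℝ g θ
  · simp [pd, fderiv_const_mul hg c]
  · have h2 : ¬ DifferentiableAt ℝ (fun x => c * g x) θ := by
      intro h
      have := (h.const_mul c⁻¹)
      simp only [← mul_assoc, inv_mul_cancel₀ hc, one_mul] at this
      exact hg this
    simp [pd, fderiv_zero_of_not_differentiableAt hg, fderiv_zero_of_not_differentiableAt h2]

lemma pd_mul_const {n : ℕ} (c : ℝ) (g : (Fin n → ℝ) → ℝ) (i : Fin n) (θ : Fin n → ℝ) :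
    pd i (fun x => g x * c) θ = pd i g θ * c := by
  simp only [mul_comm _ c]; exact pd_const_mul c g i θ

lemma pd_smooth {n : ℕ} {f : (Fin n → ℝ) → ℝ} (hf : ContDiff ℝ (⊤ : ℕ∞) f) (l : Fin n) :
    ContDiff ℝ (⊤ : ℕ∞) (fun x => pd l f x) := by
  have h1 : ContDiff ℝ (⊤ : ℕ∞) (fderiv ℝ f) := hf.fderiv_right (by exact (by simp))
  exact (ContinuousLinearMap.apply ℝ ℝ (Pi.single l 1)).contDiff.comp h1

lemma pd_log {n : ℕ} {f : (Fin n → ℝ) → ℝ} {x : Fin n → ℝ} (hf : DifferentiableAt ℝ f x)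
    (hne : f x ≠ 0) (l : Fin n) :
    pd l (fun v => Real.log (f v)) x = (f x)⁻¹ * pd l f x := by
  have := (hf.hasFDerivAt.log hne).fderiv
  simp [pd, this]

lemma pd_rpow {n : ℕ} {f : (Fin n → ℝ) → ℝ} {x : Fin n → ℝ} (hf : DifferentiableAt ℝ f x)
    (hne : f x ≠ 0) (s : ℝ) (l : Fin n) :
    pd l (fun v => f v ^ s) x = s * f x ^ (s - 1) * pd l f x := by
  have := (hf.hasFDerivAt.rpow_const (p := s) (Or.inl hne)).fderiv
  simp [pd, this]

lemma pd_mul {n : ℕ} {f g : (Fin n → ℝ) → ℝ} {x : Fin n → ℝ} (hf : DifferentiableAt ℝ f x)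
    (hg : DifferentiableAt ℝ g x) (l : Fin n) :
    pd l (fun v => f v * g v) x = pd l f x * g x + f x * pd l g x := by
  simp [pd, fderiv_fun_mul hf hg]; ring

lemma pd_inv {n : ℕ} {f : (Fin n → ℝ) → ℝ} {x : Fin n → ℝ} (hf : DifferentiableAt ℝ f x)
    (hne : f x ≠ 0) (l : Fin n) :
    pd l (fun v => (f v)⁻¹) x = -((f x)^2)⁻¹ * pd l f x := by
  have h2 := ((hasDerivAt_inv hne).comp_hasFDerivAt x hf.hasFDerivAt).fderiv
  have h3 : (fun v => (f v)⁻¹) = (fun y => y⁻¹) ∘ f := rfl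
  rw [pd, h3, h2]
  simp only [ContinuousLinearMap.smul_apply, smul_eq_mul, pd]

lemma pd_add {n : ℕ} {f g : (Fin n → ℝ) → ℝ} {x : Fin n → ℝ} (hf : DifferentiableAt ℝ f x)
    (hg : DifferentiableAt ℝ g x) (l : Fin n) :
    pd l (fun v => f v + g v) x = pd l f x + pd l g x := by
  simp [pd, fderiv_fun_add hf hg]

lemma clm_rep {n : ℕ} (L : (Fin n → ℝ) →L[ℝ] ℝ) :
    L = ∑ l : Fin n, L (Pi.single l 1) • (ContinuousLinearMap.proj l) := by
  apply ContinuousLinearMap.ext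
  intro v
  have hv : ∑ l : Fin n, Pi.single l (v l) = v := Finset.univ_sum_single v
  conv_lhs => rw [← hv]
  rw [_root_.map_sum]
  simp only [ContinuousLinearMap.sum_apply, ContinuousLinearMap.smul_apply,
    ContinuousLinearMap.proj_apply, smul_eq_mul]
  congr 1
  funext l
  have : Pi.single l (v l) = (v l) • (Pi.single l (1:ℝ) : Fin n → ℝ) := by
    funext m
    rcases eq_or_ne m l with rfl | hm
    · simp
    · simp [Pi.single_eq_of_ne hm]
  rw [this, _root_.map_smul]
  simp [mul_comm]

lemma diff_integral {n : ℕ} {Y : Type*} [MeasurableSpace Y] {μ : Measure Y}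
    (key : ∀ h : Y → ℝ, Integrable h μ)
    (F : (Fin n → ℝ) → Y → ℝ) (hF : ∀ y, ContDiff ℝ (⊤ : ℕ∞) (fun t => F t y)) (θ : Fin n → ℝ) :
    DifferentiableAt ℝ (fun t => ∫ y, F t y ∂μ) θ := by
  set F' : (Fin n → ℝ) → Y → (Fin n → ℝ) →L[ℝ] ℝ := fun x y => fderiv ℝ (fun t => F t y) x with hF'
  set bound : Y → ℝ := fun y =>
    sSup ((fun x => ‖fderiv ℝ (fun t => F t y) x‖) '' Metric.closedBall θ 1) with hbound
  have h := hasFDerivAt_integral_of_dominated_of_fderiv_le (𝕜 := ℝ) (μ := μ) (F := fun x y => F x y)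
      (F' := F') (x₀ := θ) (bound := bound) (Metric.ball_mem_nhds θ one_pos)
      (Filter.Eventually.of_forall fun x => (key (F x)).aestronglyMeasurable)
      (key _)
      ?_ ?_ (key _) ?_
  · exact h.differentiableAt
  · have hrep : F' θ = fun y => ∑ l : Fin n,
        (fderiv ℝ (fun t => F t y) θ (Pi.single l 1)) • (ContinuousLinearMap.proj l) := by
      funext y; exact clm_rep _
    rw [hrep]
    exact Finset.aestronglyMeasurable_fun_sum _ fun l _ =>
      (key (fun y => fderiv ℝ (fun t => F t y) θ (Pi.single l 1))).aestronglyMeasurable.smul_const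
        (ContinuousLinearMap.proj (R := ℝ) (φ := fun _ : Fin n => ℝ) l)
  · refine Filter.Eventually.of_forall fun y => fun x hx => ?_
    have hba : BddAbove ((fun x => ‖fderiv ℝ (fun t => F t y) x‖) '' Metric.closedBall θ 1) :=
      ((isCompact_closedBall θ 1).image (((hF y).continuous_fderiv (by simp)).norm)).bddAbove
    exact le_csSup hba ⟨x, Metric.ball_subset_closedBall hx, rfl⟩
  · exact Filter.Eventually.of_forall fun y x _ =>
      (((hF y).differentiable (by simp)) x).hasFDerivAt

/-- first log-derivative of the family. -/
noncomputable def lam {n : ℕ} {Y : Type*} (p : (Fin n → ℝ) → Y → ℝ) (m : Fin n) (y : Y) :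
    (Fin n → ℝ) → ℝ := fun u => pd m (fun s => Real.log (p s y)) u

noncomputable def bb {n : ℕ} {Y : Type*} (p : (Fin n → ℝ) → Y → ℝ) (ρ : ℝ) (m : Fin n)
    (t u : Fin n → ℝ) (y : Y) : ℝ :=
  (1 - ρ) * (p t y ^ ρ * (p u y ^ (1 - ρ) * lam p m y u))

noncomputable def ff {n : ℕ} {Y : Type*} [MeasurableSpace Y] (μ : Measure Y)
    (p : (Fin n → ℝ) → Y → ℝ) (ρ : ℝ) (t u : Fin n → ℝ) : ℝ :=
  ∫ y, p t y ^ ρ * p u y ^ (1 - ρ) ∂μ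

noncomputable def BB {n : ℕ} {Y : Type*} [MeasurableSpace Y] (μ : Measure Y)
    (p : (Fin n → ℝ) → Y → ℝ) (ρ : ℝ) (m : Fin n) (t u : Fin n → ℝ) : ℝ :=
  ∫ y, bb p ρ m t u y ∂μ

noncomputable def cc {n : ℕ} {Y : Type*} (p : (Fin n → ℝ) → Y → ℝ) (ρ : ℝ) (i j : Fin n)
    (θ t : Fin n → ℝ) (y : Y) : ℝ :=
  (1 - ρ) * (p t y ^ ρ * ((1 - ρ) * p θ y ^ (1 - ρ) * lam p i y θ * lam p j y θ
      + p θ y ^ (1 - ρ) * pd i (lam p j y) θ))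

/-- The dual connection induced by the Rényi divergence:
`Γ^{(ρ*)}_{ijk} = −∂_k∂_{i'}∂_{j'}D_ρ|_{θ=θ'} = ρ·Γ^{(e)}_{ijk} + ρ(1−ρ)·C_{ijk}`. -/
theorem stmt5 {n : ℕ} {Y : Type*} [MeasurableSpace Y] (μ : Measure Y)
    (p : (Fin n → ℝ) → Y → ℝ)
    (hpos : ∀ θ y, 0 < p θ y)
    (hsmooth : ∀ y, ContDiff ℝ (⊤ : ℕ∞) (fun θ => p θ y))
    (hnorm : ∀ θ, ∫ y, p θ y ∂μ = 1)
    -- differentiation under the integral sign is assumed valid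
    (hexch : ∀ (i : Fin n) (F : (Fin n → ℝ) → Y → ℝ) (θ : Fin n → ℝ),
      (∀ y, ContDiff ℝ (⊤ : ℕ∞) (fun t => F t y)) →
      pd i (fun t => ∫ y, F t y ∂μ) θ = ∫ y, pd i (fun t => F t y) θ ∂μ)
    (ρ : ℝ) (hρ : 0 < ρ) (hρ1 : ρ ≠ 1)
    (D : (Fin n → ℝ) → (Fin n → ℝ) → ℝ)
    (hD : ∀ θ θ', D θ θ' =
      (ρ - 1)⁻¹ * Real.log (∫ y, p θ y ^ ρ * p θ' y ^ (1 - ρ) ∂μ))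
    (Γe C : Fin n → Fin n → Fin n → (Fin n → ℝ) → ℝ)
    (hΓe : ∀ i j k θ, Γe i j k θ =
      ∫ y, p θ y * pd i (fun t => pd j (fun s => Real.log (p s y)) t) θ
        * pd k (fun t => Real.log (p t y)) θ ∂μ)
    (hC : ∀ i j k θ, C i j k θ =
      ∫ y, p θ y * pd i (fun t => Real.log (p t y)) θ
        * pd j (fun t => Real.log (p t y)) θ
        * pd k (fun t => Real.log (p t y)) θ ∂μ) :
    ∀ (i j k : Fin n) (θ : Fin n → ℝ),
      -(pd k (fun t => pd i (fun u => pd j (fun v => D t v) u) θ) θ) =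
        ρ * Γe i j k θ + ρ * (1 - ρ) * C i j k θ := by
  intro i j k θ
  -- first: integrability of p θ'
  have hpint : ∀ θ' : Fin n → ℝ, Integrable (p θ') μ := by
    intro θ'
    by_contra hc
    have h1 := hnorm θ'
    rw [integral_undef hc] at h1
    norm_num at h1
  by_cases hall : ∀ h : Y → ℝ, Integrable h μ
  swap
  · -- contradiction branch: `hexch` forces every function to be integrable
    exfalso
    push_neg at hall
    obtain ⟨h, hh⟩ := hall
    have hproj : ContDiff ℝ (⊤ : ℕ∞) (fun t : Fin n → ℝ => t i) :=
      (ContinuousLinearMap.proj (R := ℝ) (φ := fun _ : Fin n => ℝ) i).contDiff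
    have hFs : ∀ y, ContDiff ℝ (⊤ : ℕ∞) (fun t : Fin n → ℝ => (t i)^2 * h y + (t i) * p θ y) :=
      fun y => ((hproj.pow 2).mul contDiff_const).add (hproj.mul contDiff_const)
    have hzero := hexch i (fun t y => (t i)^2 * h y + (t i) * p θ y) (fun _ => 0) hFs
    have hint : (fun t : Fin n → ℝ => ∫ y, ((t i)^2 * h y + (t i) * p θ y) ∂μ)
        = fun _ => (0:ℝ) := by
      funext t
      rcases eq_or_ne (t i) 0 with h0 | h0
      · simp [h0]
      · apply integral_undef
        intro hcon
        apply hh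
        have h1 : Integrable (fun y => ((t i)^2 * h y + (t i) * p θ y) - (t i) * p θ y) μ :=
          hcon.sub ((hpint θ).const_mul _)
        have h2 : (fun y => ((t i)^2 * h y + (t i) * p θ y) - (t i) * p θ y)
            = fun y => (t i)^2 * h y := by funext y; ring
        rw [h2] at h1
        have h3 := h1.const_mul (((t i)^2)⁻¹)
        simp only [← mul_assoc, inv_mul_cancel₀ (pow_ne_zero 2 h0), one_mul] at h3
        exact h3
    rw [hint] at hzero
    have hlhs : pd i (fun _ : Fin n → ℝ => (0:ℝ)) (fun _ => 0) = 0 := by simp [pd]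
    have hder : ∀ y, pd i (fun t : Fin n → ℝ => (t i)^2 * h y + (t i) * p θ y) (fun _ => 0)
        = p θ y := by
      intro y
      have hπ : HasFDerivAt (fun t : Fin n → ℝ => t i)
          (ContinuousLinearMap.proj (R := ℝ) (φ := fun _ : Fin n => ℝ) i) (fun _ => 0) :=
        (ContinuousLinearMap.proj (R := ℝ) (φ := fun _ : Fin n => ℝ) i).hasFDerivAt
      have hg : HasDerivAt (fun s : ℝ => s^2 * h y + s * p θ y)
          ((2:ℕ) * (0:ℝ)^(2-1) * h y + 1 * p θ y) 0 :=
        (((hasDerivAt_pow 2 (0:ℝ)).mul_const (h y)).add ((hasDerivAt_id (0:ℝ)).mul_const (p θ y)))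
      have hcomp := hg.comp_hasFDerivAt (fun _ => 0) hπ
      have h2 : fderiv ℝ (fun t : Fin n → ℝ => (t i)^2 * h y + (t i) * p θ y) (fun _ => 0)
          = ((2:ℕ) * (0:ℝ)^(2-1) * h y + 1 * p θ y) •
            ContinuousLinearMap.proj (R := ℝ) (φ := fun _ : Fin n => ℝ) i :=
        hcomp.fderiv
      rw [pd, h2]
      simp
    have hrhs : ∫ y, pd i (fun t : Fin n → ℝ => (t i)^2 * h y + (t i) * p θ y) (fun _ => 0) ∂μ
        = 1 := by
      rw [integral_congr_ae (Filter.Eventually.of_forall hder)]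
      exact hnorm θ
    rw [hlhs, hrhs] at hzero
    norm_num at hzero
  -- main branch
  have hρ1' : ρ - 1 ≠ 0 := sub_ne_zero.mpr hρ1
  have hμ0 : μ ≠ 0 := by
    intro hm
    have h1 := hnorm θ
    rw [hm] at h1
    simp at h1
  have hlog : ∀ y, ContDiff ℝ (⊤ : ℕ∞) (fun v => Real.log (p v y)) :=
    fun y => (hsmooth y).log fun v => (hpos v y).ne'
  have hrpow : ∀ (s : ℝ) (y : Y), ContDiff ℝ (⊤ : ℕ∞) (fun v => p v y ^ s) := by
    intro s y
    rw [contDiff_iff_contDiffAt]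
    intro v
    exact (contDiffAt_rpow_const_of_ne (hpos v y).ne').comp v (hsmooth y).contDiffAt
  have hpdiff : ∀ (y : Y) (u : Fin n → ℝ), DifferentiableAt ℝ (fun v => p v y) u :=
    fun y u => ((hsmooth y).differentiable (by simp)) u
  have hlam_smooth : ∀ (m : Fin n) (y : Y), ContDiff ℝ (⊤ : ℕ∞) (lam p m y) :=
    fun m y => pd_smooth (hlog y) m
  have hlam_diff : ∀ (m : Fin n) (y : Y) (u : Fin n → ℝ), DifferentiableAt ℝ (lam p m y) u :=
    fun m y u => ((hlam_smooth m y).differentiable (by simp)) u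
  have hpd_p : ∀ (m : Fin n) (y : Y) (u : Fin n → ℝ),
      pd m (fun v => p v y) u = p u y * lam p m y u := by
    intro m y u
    have h1 : lam p m y u = (p u y)⁻¹ * pd m (fun v => p v y) u :=
      pd_log (hpdiff y u) (hpos u y).ne' m
    rw [h1, ← mul_assoc, mul_inv_cancel₀ (hpos u y).ne', one_mul]
  have hpd_rpow : ∀ (s : ℝ) (m : Fin n) (y : Y) (u : Fin n → ℝ),
      pd m (fun v => p v y ^ s) u = s * p u y ^ s * lam p m y u := by
    intro s m y u
    rw [pd_rpow (hpdiff y u) (hpos u y).ne' s m, hpd_p,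
      Real.rpow_sub_one (hpos u y).ne' s]
    have hp : p u y ≠ 0 := (hpos u y).ne'
    field_simp
  have hmerge : ∀ (u : Fin n → ℝ) (y : Y), p u y ^ ρ * p u y ^ (1 - ρ) = p u y := by
    intro u y
    rw [← Real.rpow_add (hpos u y), show ρ + (1 - ρ) = (1:ℝ) from by ring, Real.rpow_one]
  -- smoothness of the integrand families
  have hbs_u : ∀ (m : Fin n) (t : Fin n → ℝ) (y : Y), ContDiff ℝ (⊤ : ℕ∞) (fun u => bb p ρ m t u y) :=
    fun m t y => contDiff_const.mul (contDiff_const.mul ((hrpow (1-ρ) y).mul (hlam_smooth m y)))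
  have hbs_t : ∀ (m : Fin n) (u : Fin n → ℝ) (y : Y), ContDiff ℝ (⊤ : ℕ∞) (fun t => bb p ρ m t u y) :=
    fun m u y => contDiff_const.mul ((hrpow ρ y).mul contDiff_const)
  have hAs_u : ∀ (t : Fin n → ℝ) (y : Y), ContDiff ℝ (⊤ : ℕ∞) (fun u => p t y ^ ρ * p u y ^ (1 - ρ)) :=
    fun t y => contDiff_const.mul (hrpow (1-ρ) y)
  have hAs_t : ∀ (u : Fin n → ℝ) (y : Y), ContDiff ℝ (⊤ : ℕ∞) (fun t => p t y ^ ρ * p u y ^ (1 - ρ)) :=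
    fun u y => (hrpow ρ y).mul contDiff_const
  have hcs : ∀ y, ContDiff ℝ (⊤ : ℕ∞) (fun t => cc p ρ i j θ t y) :=
    fun y => contDiff_const.mul ((hrpow ρ y).mul contDiff_const)
  -- positivity of ff
  have hfpos : ∀ t u, 0 < ff μ p ρ t u := by
    intro t u
    have hnn : 0 ≤ (fun y => p t y ^ ρ * p u y ^ (1 - ρ)) := Pi.le_def.mpr fun y =>
      (mul_pos (Real.rpow_pos_of_pos (hpos t y) ρ) (Real.rpow_pos_of_pos (hpos u y) (1-ρ))).le
    have hsupp : Function.support (fun y => p t y ^ ρ * p u y ^ (1 - ρ)) = Set.univ :=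
      Set.eq_univ_of_forall fun y =>
        (mul_pos (Real.rpow_pos_of_pos (hpos t y) ρ) (Real.rpow_pos_of_pos (hpos u y) (1-ρ))).ne'
    exact (integral_pos_iff_support_of_nonneg hnn (hall _)).mpr
      (by rw [hsupp]; exact Measure.measure_univ_pos.mpr hμ0)
  have hfdv : ∀ t u, DifferentiableAt ℝ (fun u' => ff μ p ρ t u') u :=
    fun t u => diff_integral hall (fun u' y => p t y ^ ρ * p u' y ^ (1 - ρ))
      (fun y => hAs_u t y) u
  have hfdt : DifferentiableAt ℝ (fun t => ff μ p ρ t θ) θ :=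
    diff_integral hall (fun t y => p t y ^ ρ * p θ y ^ (1 - ρ)) (fun y => hAs_t θ y) θ
  have hBdv : ∀ (m : Fin n) t u, DifferentiableAt ℝ (fun u' => BB μ p ρ m t u') u :=
    fun m t u => diff_integral hall (fun u' y => bb p ρ m t u' y) (fun y => hbs_u m t y) u
  have hBdt : ∀ (m : Fin n), DifferentiableAt ℝ (fun t => BB μ p ρ m t θ) θ :=
    fun m => diff_integral hall (fun t y => bb p ρ m t θ y) (fun y => hbs_t m θ y) θ
  have hF4d : DifferentiableAt ℝ (fun t => ∫ y, cc p ρ i j θ t y ∂μ) θ :=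
    diff_integral hall (fun t y => cc p ρ i j θ t y) hcs θ
  -- pointwise derivative of the integrand in the second slot
  have hB1 : ∀ (m : Fin n) (t u : Fin n → ℝ) (y : Y),
      pd m (fun v => p t y ^ ρ * p v y ^ (1 - ρ)) u = bb p ρ m t u y := by
    intro m t u y
    rw [pd_const_mul (p t y ^ ρ) (fun v => p v y ^ (1 - ρ)) m u, hpd_rpow]
    simp only [bb]
    ring
  have hpdf : ∀ (m : Fin n) (t u : Fin n → ℝ),
      pd m (fun u' => ff μ p ρ t u') u = BB μ p ρ m t u := by
    intro m t u
    have h1 : pd m (fun u' => ff μ p ρ t u') u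
        = ∫ y, pd m (fun u' => p t y ^ ρ * p u' y ^ (1 - ρ)) u ∂μ :=
      hexch m (fun u' y => p t y ^ ρ * p u' y ^ (1 - ρ)) u (fun y => hAs_u t y)
    rw [h1]
    exact integral_congr_ae (Filter.Eventually.of_forall fun y => hB1 m t u y)
  -- step 1 : innermost derivative
  have hg1 : ∀ t u, pd j (fun v => D t v) u
      = (ρ - 1)⁻¹ * ((ff μ p ρ t u)⁻¹ * BB μ p ρ j t u) := by
    intro t u
    have hDf : (fun v => D t v) = fun v => (ρ - 1)⁻¹ * Real.log (ff μ p ρ t v) :=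
      funext fun v => hD t v
    have hlg : pd j (fun v => Real.log (ff μ p ρ t v)) u
        = (ff μ p ρ t u)⁻¹ * pd j (fun u' => ff μ p ρ t u') u :=
      pd_log (hfdv t u) (hfpos t u).ne' j
    rw [hDf, pd_const_mul ((ρ-1)⁻¹) (fun v => Real.log (ff μ p ρ t v)) j u, hlg, hpdf]
  -- pointwise pd of bb in the second slot at θ
  have hC1 : ∀ (t : Fin n → ℝ) (y : Y),
      pd i (fun u => bb p ρ j t u y) θ = cc p ρ i j θ t y := by
    intro t y
    have e0 : (fun u => bb p ρ j t u y)
        = fun u => (1 - ρ) * (p t y ^ ρ * (p u y ^ (1 - ρ) * lam p j y u)) := rfl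
    have e1 : pd i (fun u => p u y ^ (1 - ρ) * lam p j y u) θ
        = pd i (fun u => p u y ^ (1 - ρ)) θ * lam p j y θ
          + p θ y ^ (1 - ρ) * pd i (lam p j y) θ :=
      pd_mul (((hrpow (1-ρ) y).differentiable (by simp)) θ) (hlam_diff j y θ) i
    rw [e0, pd_const_mul (1-ρ) _ i θ, pd_const_mul (p t y ^ ρ) _ i θ, e1, hpd_rpow]
    simp only [cc]
  have hpdBθ : ∀ t, pd i (fun u => BB μ p ρ j t u) θ = ∫ y, cc p ρ i j θ t y ∂μ := by
    intro t
    have h1 : pd i (fun u => BB μ p ρ j t u) θ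
        = ∫ y, pd i (fun u => bb p ρ j t u y) θ ∂μ :=
      hexch i (fun u y => bb p ρ j t u y) θ (fun y => hbs_u j t y)
    rw [h1]
    exact integral_congr_ae (Filter.Eventually.of_forall fun y => hC1 t y)
  -- step 2 : middle derivative
  have hg2 : ∀ t, pd i (fun u => pd j (fun v => D t v) u) θ
      = (ρ - 1)⁻¹ * (-(((ff μ p ρ t θ))^2)⁻¹ * BB μ p ρ i t θ * BB μ p ρ j t θ
          + (ff μ p ρ t θ)⁻¹ * ∫ y, cc p ρ i j θ t y ∂μ) := by
    intro t
    have h1 : (fun u => pd j (fun v => D t v) u)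
        = fun u => (ρ - 1)⁻¹ * ((ff μ p ρ t u)⁻¹ * BB μ p ρ j t u) := funext fun u => hg1 t u
    have h2 : pd i (fun u => (ff μ p ρ t u)⁻¹ * BB μ p ρ j t u) θ
        = pd i (fun u => (ff μ p ρ t u)⁻¹) θ * BB μ p ρ j t θ
          + (ff μ p ρ t θ)⁻¹ * pd i (fun u => BB μ p ρ j t u) θ :=
      pd_mul ((hfdv t θ).inv (hfpos t θ).ne') (hBdv j t θ) i
    have h3 : pd i (fun u => (ff μ p ρ t u)⁻¹) θ
        = -((ff μ p ρ t θ)^2)⁻¹ * pd i (fun u' => ff μ p ρ t u') θ :=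
      pd_inv (hfdv t θ) (hfpos t θ).ne' i
    rw [h1, pd_const_mul ((ρ-1)⁻¹) _ i θ, h2, h3, hpdf, hpdBθ]
  have hfun : (fun t => pd i (fun u => pd j (fun v => D t v) u) θ)
      = fun t => (ρ - 1)⁻¹ * (-(((ff μ p ρ t θ))^2)⁻¹ * BB μ p ρ i t θ * BB μ p ρ j t θ
          + (ff μ p ρ t θ)⁻¹ * ∫ y, cc p ρ i j θ t y ∂μ) := funext hg2
  rw [hfun]
  -- zero integrals
  have hz : ∀ m : Fin n, ∫ y, p θ y * lam p m y θ ∂μ = 0 := by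
    intro m
    have h1 : ∫ y, p θ y * lam p m y θ ∂μ = ∫ y, pd m (fun v => p v y) θ ∂μ :=
      integral_congr_ae (Filter.Eventually.of_forall fun y => (hpd_p m y θ).symm)
    rw [h1, ← hexch m (fun t y => p t y) θ hsmooth]
    have h2 : (fun t => ∫ y, p t y ∂μ) = fun _ => (1:ℝ) := funext hnorm
    rw [h2]
    simp [pd]
  -- values at θ
  have hffθ : ff μ p ρ θ θ = 1 := by
    have h1 : ff μ p ρ θ θ = ∫ y, p θ y ∂μ :=
      integral_congr_ae (Filter.Eventually.of_forall fun y => hmerge θ y)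
    rw [h1]
    exact hnorm θ
  have hBBθ : ∀ m : Fin n, BB μ p ρ m θ θ = 0 := by
    intro m
    have h1 : ∀ y, bb p ρ m θ θ y = (1 - ρ) * (p θ y * lam p m y θ) := by
      intro y
      simp only [bb]
      linear_combination (1-ρ) * lam p m y θ * hmerge θ y
    have h2 : BB μ p ρ m θ θ = ∫ y, (1 - ρ) * (p θ y * lam p m y θ) ∂μ :=
      integral_congr_ae (Filter.Eventually.of_forall h1)
    rw [h2, integral_const_mul _ _, hz, mul_zero]
  have hpdffθ : pd k (fun t => ff μ p ρ t θ) θ = 0 := by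
    have h1 : pd k (fun t => ff μ p ρ t θ) θ
        = ∫ y, pd k (fun t => p t y ^ ρ * p θ y ^ (1 - ρ)) θ ∂μ :=
      hexch k (fun t y => p t y ^ ρ * p θ y ^ (1 - ρ)) θ (fun y => hAs_t θ y)
    have h2 : ∀ y, pd k (fun t => p t y ^ ρ * p θ y ^ (1 - ρ)) θ
        = ρ * (p θ y * lam p k y θ) := by
      intro y
      rw [pd_mul_const (p θ y ^ (1 - ρ)) (fun t => p t y ^ ρ) k θ, hpd_rpow]
      linear_combination ρ * lam p k y θ * hmerge θ y
    rw [h1, integral_congr_ae (Filter.Eventually.of_forall h2), integral_const_mul _ _, hz, mul_zero]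
  -- derivative of the F4 part
  have hpdF4 : pd k (fun t => ∫ y, cc p ρ i j θ t y ∂μ) θ
      = ∫ y, ρ * (1 - ρ) * (p θ y * ((1 - ρ) * lam p i y θ * lam p j y θ
          + pd i (lam p j y) θ) * lam p k y θ) ∂μ := by
    have h1 : pd k (fun t => ∫ y, cc p ρ i j θ t y ∂μ) θ
        = ∫ y, pd k (fun t => cc p ρ i j θ t y) θ ∂μ :=
      hexch k (fun t y => cc p ρ i j θ t y) θ hcs
    have h2 : ∀ y, pd k (fun t => cc p ρ i j θ t y) θ
        = ρ * (1 - ρ) * (p θ y * ((1 - ρ) * lam p i y θ * lam p j y θ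
          + pd i (lam p j y) θ) * lam p k y θ) := by
      intro y
      have e0 : (fun t => cc p ρ i j θ t y)
          = fun t => (1 - ρ) * (p t y ^ ρ * ((1 - ρ) * p θ y ^ (1 - ρ) * lam p i y θ * lam p j y θ
              + p θ y ^ (1 - ρ) * pd i (lam p j y) θ)) := rfl
      rw [e0, pd_const_mul (1-ρ) _ k θ,
        pd_mul_const _ (fun t => p t y ^ ρ) k θ, hpd_rpow]
      linear_combination (1-ρ) * ρ * lam p k y θ
        * ((1-ρ) * lam p i y θ * lam p j y θ + pd i (lam p j y) θ) * hmerge θ y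
    rw [h1]
    exact integral_congr_ae (Filter.Eventually.of_forall h2)
  -- assemble the outer derivative
  have dInv2 : DifferentiableAt ℝ (fun t => -(((ff μ p ρ t θ))^2)⁻¹) θ :=
    ((hfdt.pow 2).inv (pow_ne_zero 2 (hfpos θ θ).ne')).neg
  have dT1a : DifferentiableAt ℝ (fun t => -(((ff μ p ρ t θ))^2)⁻¹ * BB μ p ρ i t θ) θ :=
    dInv2.mul (hBdt i)
  have dT1 : DifferentiableAt ℝ
      (fun t => -(((ff μ p ρ t θ))^2)⁻¹ * BB μ p ρ i t θ * BB μ p ρ j t θ) θ :=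
    dT1a.mul (hBdt j)
  have dInv : DifferentiableAt ℝ (fun t => (ff μ p ρ t θ)⁻¹) θ :=
    hfdt.inv (hfpos θ θ).ne'
  have dT2 : DifferentiableAt ℝ (fun t => (ff μ p ρ t θ)⁻¹ * ∫ y, cc p ρ i j θ t y ∂μ) θ :=
    dInv.mul hF4d
  have epd1 : pd k (fun t => (ρ - 1)⁻¹
      * (-(((ff μ p ρ t θ))^2)⁻¹ * BB μ p ρ i t θ * BB μ p ρ j t θ
      + (ff μ p ρ t θ)⁻¹ * ∫ y, cc p ρ i j θ t y ∂μ)) θ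
      = (ρ - 1)⁻¹ * pd k (fun t => -(((ff μ p ρ t θ))^2)⁻¹ * BB μ p ρ i t θ * BB μ p ρ j t θ
        + (ff μ p ρ t θ)⁻¹ * ∫ y, cc p ρ i j θ t y ∂μ) θ :=
    pd_const_mul _ _ _ _
  have epd2 : pd k (fun t => -(((ff μ p ρ t θ))^2)⁻¹ * BB μ p ρ i t θ * BB μ p ρ j t θ
        + (ff μ p ρ t θ)⁻¹ * ∫ y, cc p ρ i j θ t y ∂μ) θ
      = pd k (fun t => -(((ff μ p ρ t θ))^2)⁻¹ * BB μ p ρ i t θ * BB μ p ρ j t θ) θ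
        + pd k (fun t => (ff μ p ρ t θ)⁻¹ * ∫ y, cc p ρ i j θ t y ∂μ) θ :=
    pd_add dT1 dT2 k
  have epd3 : pd k (fun t => -(((ff μ p ρ t θ))^2)⁻¹ * BB μ p ρ i t θ * BB μ p ρ j t θ) θ
      = 0 := by
    have h1 : pd k (fun t => -(((ff μ p ρ t θ))^2)⁻¹ * BB μ p ρ i t θ * BB μ p ρ j t θ) θ
        = pd k (fun t => -(((ff μ p ρ t θ))^2)⁻¹ * BB μ p ρ i t θ) θ * BB μ p ρ j θ θ
          + (-(((ff μ p ρ θ θ))^2)⁻¹ * BB μ p ρ i θ θ) * pd k (fun t => BB μ p ρ j t θ) θ :=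
      pd_mul dT1a (hBdt j) k
    rw [h1, hBBθ i, hBBθ j]
    ring
  have epd4 : pd k (fun t => (ff μ p ρ t θ)⁻¹ * ∫ y, cc p ρ i j θ t y ∂μ) θ
      = ∫ y, ρ * (1 - ρ) * (p θ y * ((1 - ρ) * lam p i y θ * lam p j y θ
          + pd i (lam p j y) θ) * lam p k y θ) ∂μ := by
    have h1 : pd k (fun t => (ff μ p ρ t θ)⁻¹ * ∫ y, cc p ρ i j θ t y ∂μ) θ
        = pd k (fun t => (ff μ p ρ t θ)⁻¹) θ * (∫ y, cc p ρ i j θ θ y ∂μ)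
          + (ff μ p ρ θ θ)⁻¹ * pd k (fun t => ∫ y, cc p ρ i j θ t y ∂μ) θ :=
      pd_mul dInv hF4d k
    have h2 : pd k (fun t => (ff μ p ρ t θ)⁻¹) θ
        = -((ff μ p ρ θ θ)^2)⁻¹ * pd k (fun t => ff μ p ρ t θ) θ :=
      pd_inv hfdt (hfpos θ θ).ne' k
    rw [h1, h2, hpdffθ, hpdF4, hffθ]
    ring
  rw [epd1, epd2, epd3, epd4, hΓe, hC]
  -- final algebra : split the integral
  have h1 : ∀ y, ρ * (1 - ρ) * (p θ y * ((1 - ρ) * lam p i y θ * lam p j y θ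
        + pd i (lam p j y) θ) * lam p k y θ)
      = (ρ * (1 - ρ) * (1 - ρ)) * (p θ y * pd i (fun t => Real.log (p t y)) θ
          * pd j (fun t => Real.log (p t y)) θ * pd k (fun t => Real.log (p t y)) θ)
        + (ρ * (1 - ρ)) * (p θ y * pd i (fun t => pd j (fun s => Real.log (p s y)) t) θ
          * pd k (fun t => Real.log (p t y)) θ) := by
    intro y
    show ρ * (1 - ρ) * (p θ y * ((1 - ρ) * lam p i y θ * lam p j y θ
        + pd i (lam p j y) θ) * lam p k y θ)
      = (ρ * (1 - ρ) * (1 - ρ)) * (p θ y * lam p i y θ * lam p j y θ * lam p k y θ)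
        + (ρ * (1 - ρ)) * (p θ y * pd i (lam p j y) θ * lam p k y θ)
    ring
  have hsplit : ∫ y, ρ * (1 - ρ) * (p θ y * ((1 - ρ) * lam p i y θ * lam p j y θ
        + pd i (lam p j y) θ) * lam p k y θ) ∂μ
      = (ρ * (1 - ρ) * (1 - ρ)) * (∫ y, p θ y * pd i (fun t => Real.log (p t y)) θ
          * pd j (fun t => Real.log (p t y)) θ * pd k (fun t => Real.log (p t y)) θ ∂μ)
        + (ρ * (1 - ρ)) * (∫ y, p θ y * pd i (fun t => pd j (fun s => Real.log (p s y)) t) θ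
          * pd k (fun t => Real.log (p t y)) θ ∂μ) := by
    rw [integral_congr_ae (Filter.Eventually.of_forall h1), integral_add (hall _) (hall _),
      integral_const_mul _ _, integral_const_mul _ _]
  rw [hsplit]
  field_simp
  ring
end

section
/- Hartigan's prior family equals the Rényi prior family with equal parameters: the prior defined by ∂_i log π_{α_H} = (g_F⁻¹)^{jk} [ α_H C_{ijk} + Γ^{(e)}_{ijk} ] coincides (up to a multiplicative constant) with the covolume cov^{(ρ)} satisfying ∂_i log cov^{(ρ)} = Γ^{(ρ)j}_{ji} where Γ^{(ρ)}_{ijk} = ρΓ^{(e)}_{ijk} + ρ²C_{ijk} (first kind w.r.t. the metric ρg^F), precisely when α_H = ρ. -/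
open BigOperators Matrix

/-! Since `C` and `Γ^{(e)}` are symmetric in their first two indices, the `Γ^{(e)}` terms of the
two right-hand sides cancel and their difference is `(α_H - ρ) (g_F⁻¹)^{jk} C_{ijk}`; this
contraction is nonzero at some point, so the two sides agree everywhere exactly when `α_H = ρ`. -/

theorem sum_hartigan_sub_sum_renyi {R ι : Type*} [CommRing R] [Fintype ι]
    (G : Matrix ι ι R) (C Γ : ι → ι → ι → R) (a b : R) (i : ι)
    (hC : ∀ j k, C i j k = C j i k) (hΓ : ∀ j k, Γ i j k = Γ j i k) :
    (∑ j, ∑ k, G j k * (a * C i j k + Γ i j k)) - (∑ j, ∑ k, G j k * (Γ j i k + b * C j i k)) =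
      (a - b) * ∑ j, ∑ k, G j k * C i j k := by
  simp only [Finset.mul_sum, ← Finset.sum_sub_distrib, hC, hΓ]
  refine Finset.sum_congr rfl fun j _ => Finset.sum_congr rfl fun k _ => ?_
  ring

theorem stmt15_general {n : ℕ}
    (gInv : (Fin n → ℝ) → Matrix (Fin n) (Fin n) ℝ)  -- inverse Fisher metric (g_F⁻¹)^{jk}
    (C Γe : (Fin n → ℝ) → Fin n → Fin n → Fin n → ℝ)
    -- total symmetry of the Amari–Chentsov tensor
    (hCsymm₁ : ∀ θ i j k, C θ i j k = C θ j i k)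
    -- symmetry of the exponential connection coefficients in the first two indices
    (hGesymm : ∀ θ i j k, Γe θ i j k = Γe θ j i k)
    -- nondegeneracy: the contracted Amari–Chentsov tensor does not vanish identically
    (hnd : ∃ (i : Fin n) (θ : Fin n → ℝ), (∑ j, ∑ k, gInv θ j k * C θ i j k) ≠ 0)
    (ρ αH : ℝ) :
    (∀ (i : Fin n) (θ : Fin n → ℝ),
        -- Hartigan's defining right-hand side for ∂_i log π_{α_H}
        (∑ j, ∑ k, gInv θ j k * (αH * C θ i j k + Γe θ i j k)) =
        -- trace of the second-kind Rényi connection Γ^{(ρ)j}_{ji}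
        (∑ j, ∑ l, gInv θ j l * (Γe θ j i l + ρ * C θ j i l)))
      ↔ αH = ρ := by
  have difference (i : Fin n) (θ : Fin n → ℝ) :=
    sum_hartigan_sub_sum_renyi (gInv θ) (C θ) (Γe θ) αH ρ i (hCsymm₁ θ i) (hGesymm θ i)
  constructor
  · intro h
    obtain ⟨i, θ, hne⟩ := hnd
    have hzero := difference i θ
    rw [h i θ, sub_self] at hzero
    exact sub_eq_zero.mp ((mul_eq_zero.mp hzero.symm).resolve_right hne)
  · rintro rfl i θ
    rw [← sub_eq_zero, difference, sub_self, zero_mul]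

/-- Hartigan's prior family is precisely the Rényi prior family: the defining ODE
`∂_i log π_{α_H} = (g_F⁻¹)^{jk}[α_H C_{ijk} + Γ^{(e)}_{ijk}]` for Hartigan's prior
coincides with the parallelity ODE `∂_i log cov^{(ρ)} = Γ^{(ρ)j}_{ji}` for the Rényi
covolume (where `Γ^{(ρ)j}_{ik} = (g_F⁻¹)^{jℓ}(Γ^{(e)}_{ikℓ} + ρ C_{ikℓ})`)
if and only if `α_H = ρ`. -/
theorem stmt15 {n : ℕ}
    (gInv : (Fin n → ℝ) → Matrix (Fin n) (Fin n) ℝ)  -- inverse Fisher metric (g_F⁻¹)^{jk}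
    (C Γe : (Fin n → ℝ) → Fin n → Fin n → Fin n → ℝ)
    -- total symmetry of the Amari–Chentsov tensor
    (hCsymm₁ : ∀ θ i j k, C θ i j k = C θ j i k)
    (hCsymm₂ : ∀ θ i j k, C θ i j k = C θ i k j)
    -- symmetry of the exponential connection coefficients in the first two indices
    (hGesymm : ∀ θ i j k, Γe θ i j k = Γe θ j i k)
    -- nondegeneracy: the contracted Amari–Chentsov tensor does not vanish identically
    (hnd : ∃ (i : Fin n) (θ : Fin n → ℝ), (∑ j, ∑ k, gInv θ j k * C θ i j k) ≠ 0)
    (ρ αH : ℝ) :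
    (∀ (i : Fin n) (θ : Fin n → ℝ),
        -- Hartigan's defining right-hand side for ∂_i log π_{α_H}
        (∑ j, ∑ k, gInv θ j k * (αH * C θ i j k + Γe θ i j k)) =
        -- trace of the second-kind Rényi connection Γ^{(ρ)j}_{ji}
        (∑ j, ∑ l, gInv θ j l * (Γe θ j i l + ρ * C θ j i l)))
      ↔ αH = ρ :=
  stmt15_general gInv C Γe hCsymm₁ hGesymm hnd ρ αH
end
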